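/- Assume additionally that ψ₁ is concave on (0, d). Then Ψ is continuously differentiable on (0,∞) with Ψ'(d) = 1, Ψ'(x) ≥ 1 for 0 < x < d, and Ψ'(x) ≤ 1 for x > d, and Ψ satisfies the Hamilton–Jacobi–Bellman equation of the restricted dividend problem: for every x > 0, the supremum over u ∈ [0, u₀] of (g(x) − u)·Ψ'(x) − (λ+δ)·Ψ(x) + λ·∫₀ˣ Ψ(x−y)·α·e^{−αy} dy + u equals 0. -/

import Mathlib

/-!
The matching condition makes `Ψ` continuous at `d`, and both pieces have slope `1` there, so `Ψ`
is `C¹`. On `[0, d]` the function `Ψ` is a positive multiple of `ψ₁`, hence solves `𝓛_g Ψ = 0`,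
where `𝓛_b` is the generator with premium rate `b`; and `Ψ' ≥ 1` there, because the derivative
of the concave function `ψ₁` decreases to `ψ₁'(d)`. On `[d, ∞)` we have `Ψ' ≤ 1` by concavity of
`ψ₂`, and `𝓛_{g-u₀} Ψ + u₀ = 0`: at `d` this is the previous equation since `Ψ'(d) = 1`, and it
propagates to the right because the derivative of `e^{αx} (𝓛_{g-u₀} Ψ + u₀)` is a multiple of
the second-order equation of `ψ₂`. The HJB expression is affine in `u` with slope `1 - Ψ'`, so
its supremum is `𝓛_g Ψ = 0` on `(0, d]` (at `u = 0`) and `𝓛_{g-u₀} Ψ + u₀ = 0` on `[d, ∞)`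
(at `u = u₀`).

The normalisation needs `ψ₁'(d) > 0`. It follows from the equation of `ψ₁` at `d`: since `ψ₁`
increases and `ψ₁(0) ≥ 0` (let `x → 0⁺` in the equation), the convolution term is at most
`ψ₁(d) (1 - e^{-αd})`, so `g(d) ψ₁'(d) ≥ (δ + λ e^{-αd}) ψ₁(d) > 0`.
-/

open Set Filter Topology intervalIntegral

section Gluing

variable {F f₁ f₂ f₁' f₂' : ℝ → ℝ} {a d : ℝ}

lemma eq_left_of_eq_ite {x : ℝ} (hF : ∀ x, F x = if x < d then f₁ x else f₂ x)
    (hd : f₁ d = f₂ d) (hx : x ≤ d) : F x = f₁ x := by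
  rcases hx.lt_or_eq with hx | rfl
  · simp [hF, hx]
  · simp [hF, hd]

lemma eq_right_of_eq_ite {x : ℝ} (hF : ∀ x, F x = if x < d then f₁ x else f₂ x)
    (hx : d ≤ x) : F x = f₂ x := by
  simp [hF, not_lt.2 hx]

lemma hasDerivAt_of_eq_Iic_Ici {c x : ℝ} (hF₁ : ∀ y ≤ d, F y = f₁ y)
    (hF₂ : ∀ y ≥ d, F y = f₂ y) (h₁ : x ≤ d → HasDerivAt f₁ c x)
    (h₂ : d ≤ x → HasDerivAt f₂ c x) : HasDerivAt F c x := by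
  rcases lt_trichotomy x d with hxd | rfl | hxd
  · exact (h₁ hxd.le).congr_of_eventuallyEq
      (eventually_of_mem (Iio_mem_nhds hxd) fun y hy => hF₁ y (le_of_lt hy))
  · have h := ((h₁ le_rfl).hasDerivWithinAt (s := Iic x)).congr hF₁ (hF₁ x le_rfl) |>.union
      (((h₂ le_rfl).hasDerivWithinAt (s := Ici x)).congr hF₂ (hF₂ x le_rfl))
    rwa [Iic_union_Ici, hasDerivWithinAt_univ] at h
  · exact (h₂ hxd.le).congr_of_eventuallyEq
      (eventually_of_mem (Ioi_mem_nhds hxd) fun y hy => hF₂ y (le_of_lt hy))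

lemma hasDerivAt_of_eq_ite (hF : ∀ x, F x = if x < d then f₁ x else f₂ x) (had : a ≤ d)
    (hd : f₁ d = f₂ d) (h₁ : ∀ x ∈ Icc a d, HasDerivAt f₁ (f₁' x) x)
    (h₂ : ∀ x ≥ d, HasDerivAt f₂ (f₂' x) x) (hd' : f₁' d = f₂' d) :
    (∀ x ∈ Icc a d, HasDerivAt F (f₁' x) x) ∧ ∀ x ≥ d, HasDerivAt F (f₂' x) x := by
  have hF₁ (y : ℝ) (hy : y ≤ d) : F y = f₁ y := eq_left_of_eq_ite hF hd hy
  have hF₂ (y : ℝ) (hy : y ≥ d) : F y = f₂ y := eq_right_of_eq_ite hF hy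
  refine ⟨fun x hx => hasDerivAt_of_eq_Iic_Ici hF₁ hF₂ (fun _ => h₁ x hx) fun hdx => ?_,
    fun x hx => hasDerivAt_of_eq_Iic_Ici hF₁ hF₂ (fun hxd => ?_) fun _ => h₂ x hx⟩
  · obtain rfl := le_antisymm hx.2 hdx
    exact hd' ▸ h₂ x le_rfl
  · obtain rfl := le_antisymm hxd hx
    exact hd' ▸ h₁ x ⟨had, le_rfl⟩

lemma continuousOn_of_eq_Iic_Ici {G : ℝ → ℝ} {s : Set ℝ} (h₁ : ContinuousOn f₁ s)
    (h₂ : ContinuousOn f₂ s) (hG₁ : ∀ x ∈ s, x ≤ d → G x = f₁ x)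
    (hG₂ : ∀ x ∈ s, d ≤ x → G x = f₂ x) : ContinuousOn G s := by
  refine (ContinuousOn.if (p := fun x => x ≤ d) (fun x hx => ?_) (h₁.mono inter_subset_left)
    (h₂.mono inter_subset_left)).congr fun x hx => ?_
  · rw [show {x | x ≤ d} = Iic d from rfl, frontier_Iic] at hx
    rw [← hG₁ x hx.1 hx.2.le, hG₂ x hx.1 hx.2.ge]
  · dsimp only
    split_ifs with hxd
    · exact hG₁ x hx hxd
    · exact hG₂ x hx (not_le.1 hxd).le

end Gluing

lemma AntitoneOn.le_of_continuousWithinAt_Iio {f : ℝ → ℝ} {a b x : ℝ}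
    (hf : AntitoneOn f (Ioo a b)) (hb : ContinuousWithinAt f (Iio b) b) (hx : x ∈ Ioc a b) :
    f b ≤ f x := by
  rcases hx.2.lt_or_eq with hxb | rfl
  · exact le_of_tendsto hb (eventually_of_mem (Ioo_mem_nhdsLT hxb) fun _ hy =>
      hf ⟨hx.1, hxb⟩ ⟨hx.1.trans hy.1, hy.2⟩ hy.1.le)
  · exact le_rfl

lemma ConcaveOn.antitoneOn_of_hasDerivAt {f f' : ℝ → ℝ} {s : Set ℝ} (hfc : ConcaveOn ℝ s f)
    (hf : ∀ x ∈ s, HasDerivAt f (f' x) x) : AntitoneOn f' s :=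
  (hfc.antitoneOn_deriv fun x hx => (hf x hx).differentiableAt).congr
    fun x hx => (hf x hx).deriv

lemma csSup_image_add_mul_Icc (A b : ℝ) {c : ℝ} (hc : 0 ≤ c) :
    sSup ((fun u => A + u * b) '' Icc 0 c) = max A (A + c * b) := by
  rcases le_total 0 b with hb | hb
  · rw [max_eq_right (le_add_of_nonneg_right (mul_nonneg hc hb))]
    refine IsGreatest.csSup_eq ⟨mem_image_of_mem _ ⟨hc, le_rfl⟩, ?_⟩
    rintro _ ⟨u, hu, rfl⟩
    exact add_le_add_right (mul_le_mul_of_nonneg_right hu.2 hb) A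
  · rw [max_eq_left (add_le_of_nonpos_right (mul_nonpos_of_nonneg_of_nonpos hc hb))]
    refine IsGreatest.csSup_eq ⟨⟨0, ⟨le_rfl, hc⟩, by simp⟩, ?_⟩
    rintro _ ⟨u, hu, rfl⟩
    exact add_le_of_nonpos_right (mul_nonpos_of_nonneg_of_nonpos hu.1 hb)

noncomputable def expConv (α : ℝ) (f : ℝ → ℝ) (x : ℝ) : ℝ :=
  ∫ y in (0:ℝ)..x, f (x - y) * (α * Real.exp (-α * y))

section ExpConv

variable {α x : ℝ} {f : ℝ → ℝ}

lemma expConv_eq (α : ℝ) (f : ℝ → ℝ) (x : ℝ) :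
    expConv α f x = α * Real.exp (-α * x) * ∫ s in (0:ℝ)..x, f s * Real.exp (α * s) := by
  have hsub := integral_comp_sub_left (a := 0) (b := x) (fun s => f s * Real.exp (α * s)) x
  rw [sub_self, sub_zero] at hsub
  rw [← hsub, ← integral_const_mul]
  refine integral_congr fun y _ => ?_
  rw [show α * (x - y) = α * x + -α * y by ring, Real.exp_add,
    show -α * x = -(α * x) by ring, Real.exp_neg]
  field_simp

lemma integral_exp_kernel (α b : ℝ) :
    ∫ y in (0:ℝ)..b, α * Real.exp (-α * y) = 1 - Real.exp (-α * b) := by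
  have h (y : ℝ) : HasDerivAt (fun t => -Real.exp (-α * t)) (α * Real.exp (-α * y)) y :=
    ((((hasDerivAt_id y).const_mul (-α)).exp).neg).congr_deriv (by simp [mul_comm])
  rw [integral_eq_sub_of_hasDerivAt (fun y _ => h y)
    ((by fun_prop : Continuous fun y => α * Real.exp (-α * y)).intervalIntegrable _ _)]
  simp only [neg_mul, mul_zero, Real.exp_zero, sub_neg_eq_add]
  ring

lemma expConv_zero_right : expConv α f 0 = 0 := integral_same

lemma expConv_congr {g : ℝ → ℝ} (hx : 0 ≤ x) (h : EqOn f g (Icc 0 x)) :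
    expConv α f x = expConv α g x := by
  refine integral_congr fun y hy => ?_
  rw [uIcc_of_le hx] at hy
  simp only [h ⟨sub_nonneg.2 hy.2, sub_le_self x hy.1⟩]

lemma expConv_div_const (c : ℝ) : expConv α (fun s => f s / c) x = expConv α f x / c := by
  simp only [expConv, div_mul_eq_mul_div, intervalIntegral.integral_div]

lemma expConv_le_mul (hα : 0 ≤ α) (hx : 0 ≤ x) (hf : ContinuousOn f (Icc 0 x))
    (hmono : MonotoneOn f (Icc 0 x)) : expConv α f x ≤ f x * (1 - Real.exp (-α * x)) := by
  have hshift : ContinuousOn (fun y => f (x - y)) (Icc 0 x) :=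
    hf.comp (by fun_prop) fun y hy => ⟨sub_nonneg.2 hy.2, sub_le_self x hy.1⟩
  rw [← integral_exp_kernel, ← integral_const_mul]
  refine integral_mono_on hx ?_ (Continuous.intervalIntegrable (by fun_prop) _ _) fun y hy => ?_
  · exact (hshift.mul (by fun_prop)).intervalIntegrable_of_Icc hx
  · exact mul_le_mul_of_nonneg_right
      (hmono ⟨sub_nonneg.2 hy.2, sub_le_self x hy.1⟩ ⟨hx, le_rfl⟩ (sub_le_self x hy.1))
      (by positivity)

lemma hasDerivAt_exp_mul_expConv (hf : ContinuousOn f (Ici 0)) (hx : 0 < x) :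
    HasDerivAt (fun t => Real.exp (α * t) * expConv α f t) (α * (f x * Real.exp (α * x))) x := by
  have hF : ContinuousOn (fun s => f s * Real.exp (α * s)) (Ici 0) := hf.mul (by fun_prop)
  have hprim : HasDerivAt (fun t => ∫ s in (0:ℝ)..t, f s * Real.exp (α * s))
      (f x * Real.exp (α * x)) x :=
    integral_hasDerivAt_right ((hF.mono Icc_subset_Ici_self).intervalIntegrable_of_Icc hx.le)
      ((hF.mono Ioi_subset_Ici_self).stronglyMeasurableAtFilter isOpen_Ioi x hx)
      (hF.continuousAt (Ici_mem_nhds hx))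
  refine (hprim.const_mul α).congr_of_eventuallyEq (Eventually.of_forall fun t => ?_)
  simp only [expConv_eq]
  rw [← mul_assoc, ← mul_assoc, mul_comm (Real.exp _), mul_assoc α, ← Real.exp_add]
  simp

lemma continuousWithinAt_expConv_zero (hf : ContinuousOn f (Ici 0)) :
    ContinuousWithinAt (expConv α f) (Ici 0) 0 := by
  have hF : ContinuousOn (fun s => f s * Real.exp (α * s)) (uIcc 0 1) := by
    rw [uIcc_of_le zero_le_one]
    exact (hf.mono Icc_subset_Ici_self).mul (by fun_prop)
  have h : ContinuousOn (expConv α f) (uIcc 0 1) := by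
    simp only [funext (expConv_eq α f)]
    exact (Continuous.continuousOn (by fun_prop)).mul
      (continuousOn_primitive_interval (hF.integrableOn_compact isCompact_uIcc))
  rw [uIcc_of_le zero_le_one] at h
  exact (h 0 ⟨le_rfl, zero_le_one⟩).mono_of_mem_nhdsWithin (Icc_mem_nhdsGE zero_lt_one)

end ExpConv

/-- `𝓛_b f` for the compound Poisson surplus with premium rate `b`, claims at rate `lam` with
`Exp(α)` sizes and discount rate `del`; `f'` stands for the derivative of `f`. The convolution
stops at `x` because a claim larger than the surplus causes ruin, where the value is `0`. -/
noncomputable def generator (lam del α : ℝ) (b f f' : ℝ → ℝ) (x : ℝ) : ℝ :=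
  b x * f' x - (lam + del) * f x + lam * expConv α f x

section Generator

variable {lam del α x u₀ : ℝ} {b f f' : ℝ → ℝ}

lemma generator_congr {h h' : ℝ → ℝ} (hx : 0 ≤ x) (hf : EqOn f h (Icc 0 x))
    (hf' : f' x = h' x) : generator lam del α b f f' x = generator lam del α b h h' x := by
  simp only [generator, expConv_congr hx hf, hf', hf ⟨hx, le_rfl⟩]

lemma generator_div_const (c : ℝ) :
    generator lam del α b (fun s => f s / c) (fun s => f' s / c) x
      = generator lam del α b f f' x / c := by
  simp only [generator, expConv_div_const]
  ring

lemma generator_eq_zero_of_eq_div {F F' : ℝ → ℝ} {c : ℝ} (hx : 0 ≤ x)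
    (hF : ∀ s ∈ Icc 0 x, F s = f s / c) (hF' : F' x = f' x / c)
    (h : generator lam del α b f f' x = 0) : generator lam del α b F F' x = 0 := by
  rw [generator_congr (h := fun s => f s / c) (h' := fun s => f' s / c) hx hF hF',
    generator_div_const, h, zero_div]

lemma generator_sub_const_add (u : ℝ) :
    generator lam del α (fun y => b y - u) f f' x + u
      = generator lam del α b f f' x + u * (1 - f' x) := by
  simp only [generator]
  ring

lemma mul_deriv_zero_eq_of_generator_eq_zero (hb : ContinuousWithinAt b (Ici 0) 0)
    (hf : ContinuousOn f (Ici 0)) (hf' : ContinuousOn f' (Ici 0))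
    (h : ∀ x > 0, generator lam del α b f f' x = 0) : b 0 * f' 0 = (lam + del) * f 0 := by
  have hcont : ContinuousWithinAt (generator lam del α b f f') (Ici 0) 0 :=
    ((hb.mul (hf' 0 self_mem_Ici)).sub ((hf 0 self_mem_Ici).const_mul _)).add
      ((continuousWithinAt_expConv_zero hf).const_mul _)
  have h0 := (hcont.mono Ioi_subset_Ici_self).eq_const_of_mem_closure
    (by rw [closure_Ioi]; exact self_mem_Ici) h
  rw [generator, expConv_zero_right] at h0
  linarith

lemma mul_deriv_pos_of_generator_eq_zero {d : ℝ} (hlam : 0 ≤ lam) (hdel : 0 < del)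
    (hα : 0 ≤ α) (hd : 0 ≤ d) (hf : ContinuousOn f (Icc 0 d)) (hmono : MonotoneOn f (Icc 0 d))
    (hfd : 0 < f d) (h : generator lam del α b f f' d = 0) : 0 < b d * f' d := by
  have hconv := expConv_le_mul hα hd hf hmono
  have hexp := Real.exp_pos (-α * d)
  rw [generator] at h
  nlinarith [mul_le_mul_of_nonneg_left hconv hlam, mul_nonneg hlam (mul_pos hfd hexp).le]

lemma deriv_pos_of_generator_eq_zero {d : ℝ} (hlam : 0 ≤ lam) (hdel : 0 < del) (hα : 0 ≤ α)
    (hd : 0 < d) (hb : ContinuousWithinAt b (Ici 0) 0) (hbpos : ∀ x ≥ 0, 0 < b x)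
    (hf : ∀ x ≥ 0, HasDerivAt f (f' x) x) (hf'c : ContinuousOn f' (Ici 0))
    (hmono : StrictMonoOn f (Ici 0)) (h : ∀ x > 0, generator lam del α b f f' x = 0) :
    0 < f' d := by
  have hfc : ContinuousOn f (Ici 0) := fun x hx => (hf x hx).continuousAt.continuousWithinAt
  have hf'0 : 0 ≤ f' 0 := by
    have h0 := hmono.monotoneOn.derivWithin_nonneg (x := 0)
    rwa [(hf 0 le_rfl).hasDerivWithinAt.derivWithin (uniqueDiffOn_Ici 0 0 self_mem_Ici)] at h0
  have hf0 : 0 ≤ f 0 := by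
    have h0 := mul_deriv_zero_eq_of_generator_eq_zero hb hfc hf'c h
    nlinarith [mul_nonneg (hbpos 0 le_rfl).le hf'0]
  exact pos_of_mul_pos_right (mul_deriv_pos_of_generator_eq_zero hlam hdel hα hd.le
    (hfc.mono Icc_subset_Ici_self) (hmono.monotoneOn.mono Icc_subset_Ici_self)
    (hf0.trans_lt (hmono self_mem_Ici hd.le hd)) (h d hd)) (hbpos d hd.le).le

/-- Multiplying by `e^{αt}` turns the convolution term into `α λ ∫₀ᵗ f(s) e^{αs} ds`, whose
derivative is local. -/
lemma hasDerivAt_exp_mul_generator {b' f'' : ℝ} (k : ℝ) (hx : 0 < x) (hb : HasDerivAt b b' x)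
    (hf : HasDerivAt f (f' x) x) (hf' : HasDerivAt f' f'' x) (hfc : ContinuousOn f (Ici 0)) :
    HasDerivAt (fun t => Real.exp (α * t) * (generator lam del α b f f' t + k))
      (Real.exp (α * x) * (b x * f'' + (α * b x + b' - (lam + del)) * f' x
        - α * del * f x + α * k)) x := by
  have hexp : HasDerivAt (fun t => Real.exp (α * t)) (Real.exp (α * x) * α) x :=
    ((hasDerivAt_id x).const_mul α).exp.congr_deriv (by simp)
  have hlocal := hexp.mul (((hb.mul hf').sub (hf.const_mul (lam + del))).add_const k)
  have hconv := (hasDerivAt_exp_mul_expConv (α := α) hfc hx).const_mul lam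
  refine ((hlocal.add hconv).congr_deriv ?_).congr_of_eventuallyEq
    (Eventually.of_forall fun t => ?_)
  · simp only [Pi.mul_apply, Pi.sub_apply]
    ring
  · simp only [generator, Pi.add_apply, Pi.mul_apply, Pi.sub_apply]
    ring

lemma generator_add_eq_zero_of_ode {b' f'' : ℝ → ℝ} {d k : ℝ} (hd : 0 < d)
    (hb : ∀ t ≥ d, HasDerivAt b (b' t) t) (hf : ∀ t ≥ d, HasDerivAt f (f' t) t)
    (hf' : ∀ t ≥ d, HasDerivAt f' (f'' t) t) (hfc : ContinuousOn f (Ici 0))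
    (hode : ∀ t ≥ d,
      b t * f'' t + (α * b t + b' t - (lam + del)) * f' t - α * del * f t + α * k = 0)
    (hgen : generator lam del α b f f' d + k = 0) (hx : d ≤ x) :
    generator lam del α b f f' x + k = 0 := by
  set φ := fun t => Real.exp (α * t) * (generator lam del α b f f' t + k)
  have hφ' (t : ℝ) (ht : d ≤ t) : HasDerivAt φ 0 t := by
    simpa [hode t ht] using hasDerivAt_exp_mul_generator (lam := lam) (del := del) (α := α) k
      (hd.trans_le ht) (hb t ht) (hf t ht) (hf' t ht) hfc
  have hconst := constant_of_has_deriv_right_zero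
    (fun t ht => (hφ' t ht.1).continuousAt.continuousWithinAt)
    (fun t ht => (hφ' t ht.1).hasDerivWithinAt) x ⟨hx, le_rfl⟩
  simpa [φ, hgen, Real.exp_ne_zero] using hconst

lemma generator_add_eq_zero_of_ode_solution {d : ℝ} {g g' ψ ψ' ψ'' F F' : ℝ → ℝ}
    (hdel : del ≠ 0) (hψ'd : ψ' d ≠ 0) (hd : 0 < d) (hg : ∀ t ≥ d, HasDerivAt g (g' t) t)
    (hψ' : ∀ t ≥ d, HasDerivAt ψ' (ψ'' t) t) (hF : ∀ t ≥ d, F t = u₀ / del + ψ t / ψ' d)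
    (hF' : ∀ t ≥ d, F' t = ψ' t / ψ' d) (hFd : ∀ t ≥ d, HasDerivAt F (ψ' t / ψ' d) t)
    (hFc : ContinuousOn F (Ici 0))
    (hode : ∀ t ≥ d,
      (g t - u₀) * ψ'' t + (α * (g t - u₀) + g' t - (lam + del)) * ψ' t - α * del * ψ t = 0)
    (hgen : generator lam del α g F F' d = 0) (hx : d ≤ x) :
    generator lam del α (fun y => g y - u₀) F F' x + u₀ = 0 := by
  have hcongr (y : ℝ) (hy : d ≤ y) : generator lam del α (fun y => g y - u₀) F F' y
      = generator lam del α (fun y => g y - u₀) F (fun t => ψ' t / ψ' d) y :=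
    generator_congr (hd.le.trans hy) (fun _ _ => rfl) (hF' y hy)
  rw [hcongr x hx]
  refine generator_add_eq_zero_of_ode hd (fun t ht => (hg t ht).sub_const u₀) hFd
    (fun t ht => (hψ' t ht).div_const _) hFc (fun t ht => ?_) ?_ hx
  · rw [hF t ht]
    field_simp
    linear_combination hode t ht
  · rw [← hcongr d le_rfl, generator_sub_const_add, hF' d le_rfl, div_self hψ'd, sub_self,
      mul_zero, add_zero, hgen]

lemma sSup_generator_eq_zero_of_one_le (hu₀ : 0 ≤ u₀) (h : generator lam del α b f f' x = 0)
    (h1 : 1 ≤ f' x) :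
    sSup ((fun u => generator lam del α (fun y => b y - u) f f' x + u) '' Icc 0 u₀) = 0 := by
  simp only [generator_sub_const_add, h, csSup_image_add_mul_Icc _ _ hu₀]
  exact max_eq_left (by nlinarith)

lemma sSup_generator_eq_zero_of_le_one (hu₀ : 0 ≤ u₀)
    (h : generator lam del α (fun y => b y - u₀) f f' x + u₀ = 0) (h1 : f' x ≤ 1) :
    sSup ((fun u => generator lam del α (fun y => b y - u) f f' x + u) '' Icc 0 u₀) = 0 := by
  rw [generator_sub_const_add] at h
  simp only [generator_sub_const_add, csSup_image_add_mul_Icc _ _ hu₀, h]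
  exact max_eq_right (by nlinarith)

end Generator

theorem stmt_9_general (lam del al u0 d : ℝ)
    (g g' ψ₁ ψ₁' ψ₂ ψ₂' ψ₂'' Ψ : ℝ → ℝ)
    (hlam : 0 < lam) (hdel : 0 < del) (hal : 0 < al) (hu0 : 0 < u0)
    (hg : ∀ x ≥ (0:ℝ), HasDerivAt g (g' x) x)
    (hgu : ∀ x ≥ (0:ℝ), u0 < g x)
    (hψ₁d : ∀ x ≥ (0:ℝ), HasDerivAt ψ₁ (ψ₁' x) x)
    (hψ₁'c : ContinuousOn ψ₁' (Set.Ici 0))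
    (hψ₁mono : StrictMonoOn ψ₁ (Set.Ici 0))
    (hψ₁eq : ∀ x > (0:ℝ),
      g x * ψ₁' x - (lam + del) * ψ₁ x
        + lam * ∫ y in (0:ℝ)..x, ψ₁ (x - y) * (al * Real.exp (-al * y)) = 0)
    (hψ₂d : ∀ x ≥ (0:ℝ), HasDerivAt ψ₂ (ψ₂' x) x)
    (hψ₂d2 : ∀ x ≥ (0:ℝ), HasDerivAt ψ₂' (ψ₂'' x) x)
    (hψ₂conc : ConcaveOn ℝ (Set.Ici 0) ψ₂)
    (hψ₂eq : ∀ x > (0:ℝ),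
      (g x - u0) * ψ₂'' x + (al * (g x - u0) + g' x - (lam + del)) * ψ₂' x
        - al * del * ψ₂ x = 0)
    (hd : 0 < d) (hψ₂'d : 0 < ψ₂' d)
    (hmatch : ψ₁ d / ψ₁' d - ψ₂ d / ψ₂' d = u0 / del)
    (hΨ : ∀ x, Ψ x = if x < d then ψ₁ x / ψ₁' d else u0 / del + ψ₂ x / ψ₂' d)
    (hψ₁conc : ConcaveOn ℝ (Set.Ioo 0 d) ψ₁) :
    (∀ x > (0:ℝ), DifferentiableAt ℝ Ψ x) ∧
    ContinuousOn (deriv Ψ) (Set.Ioi 0) ∧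
    deriv Ψ d = 1 ∧
    (∀ x : ℝ, 0 < x → x < d → 1 ≤ deriv Ψ x) ∧
    (∀ x : ℝ, d < x → deriv Ψ x ≤ 1) ∧
    ∀ x > (0:ℝ),
      sSup ((fun u => (g x - u) * deriv Ψ x - (lam + del) * Ψ x
          + lam * (∫ y in (0:ℝ)..x, Ψ (x - y) * (al * Real.exp (-al * y))) + u) ''
        Set.Icc (0:ℝ) u0) = 0 := by
  have hc₁ : 0 < ψ₁' d := deriv_pos_of_generator_eq_zero hlam.le hdel hal.le hd
    (hg 0 le_rfl).continuousAt.continuousWithinAt (fun x hx => hu0.trans (hgu x hx)) hψ₁d hψ₁'c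
    hψ₁mono hψ₁eq
  have hmatch' : ψ₁ d / ψ₁' d = u0 / del + ψ₂ d / ψ₂' d := by linarith
  have hΨ₁ (x : ℝ) (hx : x ≤ d) : Ψ x = ψ₁ x / ψ₁' d := eq_left_of_eq_ite hΨ hmatch' hx
  obtain ⟨hD₁, hD₂⟩ := hasDerivAt_of_eq_ite hΨ hd.le hmatch'
    (fun x hx => (hψ₁d x hx.1).div_const (ψ₁' d))
    (fun x hx => ((hψ₂d x (hd.le.trans hx)).div_const (ψ₂' d)).const_add (u0 / del))
    (by rw [div_self hc₁.ne', div_self hψ₂'d.ne'])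
  have hdiff (x : ℝ) (hx : 0 ≤ x) : DifferentiableAt ℝ Ψ x :=
    (le_total x d).elim (fun hxd => (hD₁ x ⟨hx, hxd⟩).differentiableAt)
      fun hxd => (hD₂ x hxd).differentiableAt
  have hDd : deriv Ψ d = 1 := by rw [(hD₂ d le_rfl).deriv, div_self hψ₂'d.ne']
  have hge (x : ℝ) (hx : x ∈ Ioc 0 d) : 1 ≤ deriv Ψ x := by
    rw [(hD₁ x ⟨hx.1.le, hx.2⟩).deriv, one_le_div hc₁]
    exact (hψ₁conc.antitoneOn_of_hasDerivAt fun y hy => hψ₁d y hy.1.le).le_of_continuousWithinAt_Iio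
      (hψ₁'c.continuousAt (Ici_mem_nhds hd)).continuousWithinAt hx
  have hle (x : ℝ) (hx : d < x) : deriv Ψ x ≤ 1 := by
    rw [(hD₂ x hx.le).deriv, div_le_one hψ₂'d]
    exact hψ₂conc.antitoneOn_of_hasDerivAt hψ₂d (mem_Ici.2 hd.le) (mem_Ici.2 (hd.trans hx).le) hx.le
  have hgen₁ (x : ℝ) (hx : x ∈ Ioc 0 d) : generator lam del al g Ψ (deriv Ψ) x = 0 :=
    generator_eq_zero_of_eq_div hx.1.le (fun s hs => hΨ₁ s (hs.2.trans hx.2))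
      (hD₁ x ⟨hx.1.le, hx.2⟩).deriv (hψ₁eq x hx.1)
  have hgen₂ (x : ℝ) (hx : x ≥ d) :
      generator lam del al (fun y => g y - u0) Ψ (deriv Ψ) x + u0 = 0 :=
    generator_add_eq_zero_of_ode_solution hdel.ne' hψ₂'d.ne' hd
      (fun t ht => hg t (hd.le.trans ht)) (fun t ht => hψ₂d2 t (hd.le.trans ht))
      (fun t ht => eq_right_of_eq_ite hΨ ht) (fun t ht => (hD₂ t ht).deriv) hD₂
      (fun t ht => (hdiff t ht).continuousAt.continuousWithinAt)
      (fun t ht => hψ₂eq t (hd.trans_le ht)) (hgen₁ d ⟨hd, le_rfl⟩) hx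
  refine ⟨fun x hx => hdiff x hx.le, ?_, hDd, fun x hx hxd => hge x ⟨hx, hxd.le⟩, hle,
    fun x hx => ?_⟩
  · have hψ₂'c : ContinuousOn ψ₂' (Ioi 0) :=
      fun x hx => (hψ₂d2 x (le_of_lt hx)).continuousAt.continuousWithinAt
    exact continuousOn_of_eq_Iic_Ici ((hψ₁'c.mono Ioi_subset_Ici_self).div_const _)
      (hψ₂'c.div_const _) (fun x hx hxd => (hD₁ x ⟨le_of_lt hx, hxd⟩).deriv)
      fun x _ hxd => (hD₂ x hxd).deriv
  rcases le_or_gt x d with hxd | hxd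
  · exact sSup_generator_eq_zero_of_one_le hu0.le (hgen₁ x ⟨hx, hxd⟩) (hge x ⟨hx, hxd⟩)
  · exact sSup_generator_eq_zero_of_le_one hu0.le (hgen₂ x hxd.le) (hle x hxd)

/-- Assuming additionally that ψ₁ is concave on (0, d), the function Ψ is
continuously differentiable on (0,∞) with Ψ'(d) = 1, Ψ' ≥ 1 on (0, d), Ψ' ≤ 1 on
(d, ∞), and Ψ satisfies the HJB equation of the restricted dividend problem: for every
x > 0, sup_{u ∈ [0,u₀]} { (g(x)−u)Ψ'(x) − (λ+δ)Ψ(x) + λ∫₀ˣ Ψ(x−y)αe^{−αy}dy + u } = 0. -/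
theorem stmt_9 (lam del al u0 d : ℝ)
    (g g' ψ₁ ψ₁' ψ₂ ψ₂' ψ₂'' Ψ : ℝ → ℝ)
    (hlam : 0 < lam) (hdel : 0 < del) (hal : 0 < al) (hu0 : 0 < u0)
    (hg : ∀ x ≥ (0:ℝ), HasDerivAt g (g' x) x)
    (hg'c : ContinuousOn g' (Set.Ici 0))
    (hgu : ∀ x ≥ (0:ℝ), u0 < g x)
    (hψ₁d : ∀ x ≥ (0:ℝ), HasDerivAt ψ₁ (ψ₁' x) x)
    (hψ₁'c : ContinuousOn ψ₁' (Set.Ici 0))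
    (hψ₁mono : StrictMonoOn ψ₁ (Set.Ici 0))
    (hψ₁eq : ∀ x > (0:ℝ),
      g x * ψ₁' x - (lam + del) * ψ₁ x
        + lam * ∫ y in (0:ℝ)..x, ψ₁ (x - y) * (al * Real.exp (-al * y)) = 0)
    (hψ₂bdd : ∃ M : ℝ, ∀ x ≥ (0:ℝ), |ψ₂ x| ≤ M)
    (hψ₂d : ∀ x ≥ (0:ℝ), HasDerivAt ψ₂ (ψ₂' x) x)
    (hψ₂d2 : ∀ x ≥ (0:ℝ), HasDerivAt ψ₂' (ψ₂'' x) x)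
    (hψ₂''c : ContinuousOn ψ₂'' (Set.Ici 0))
    (hψ₂conc : ConcaveOn ℝ (Set.Ici 0) ψ₂)
    (hψ₂eq : ∀ x > (0:ℝ),
      (g x - u0) * ψ₂'' x + (al * (g x - u0) + g' x - (lam + del)) * ψ₂' x
        - al * del * ψ₂ x = 0)
    (hd : 0 < d) (hψ₂'d : 0 < ψ₂' d)
    (hmatch : ψ₁ d / ψ₁' d - ψ₂ d / ψ₂' d = u0 / del)
    (hΨ : ∀ x, Ψ x = if x < d then ψ₁ x / ψ₁' d else u0 / del + ψ₂ x / ψ₂' d)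
    (hψ₁conc : ConcaveOn ℝ (Set.Ioo 0 d) ψ₁) :
    (∀ x > (0:ℝ), DifferentiableAt ℝ Ψ x) ∧
    ContinuousOn (deriv Ψ) (Set.Ioi 0) ∧
    deriv Ψ d = 1 ∧
    (∀ x : ℝ, 0 < x → x < d → 1 ≤ deriv Ψ x) ∧
    (∀ x : ℝ, d < x → deriv Ψ x ≤ 1) ∧
    ∀ x > (0:ℝ),
      sSup ((fun u => (g x - u) * deriv Ψ x - (lam + del) * Ψ x
          + lam * (∫ y in (0:ℝ)..x, Ψ (x - y) * (al * Real.exp (-al * y))) + u) ''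
        Set.Icc (0:ℝ) u0) = 0 :=
  stmt_9_general lam del al u0 d g g' ψ₁ ψ₁' ψ₂ ψ₂' ψ₂'' Ψ hlam hdel hal hu0 hg hgu hψ₁d hψ₁'c
    hψ₁mono hψ₁eq hψ₂d hψ₂d2 hψ₂conc hψ₂eq hd hψ₂'d hmatch hΨ hψ₁conc
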